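/- Let H be a connected linear k-uniform hypergraph (k ≥ 3) containing no Berge-B_s, where s ≥ 2. Then for any two adjacent vertices x, y of H, the number of common neighbors |N_{xy}| satisfies |N_{xy}| ≤ (k-1)(2s-1) - s. -/

import Mathlib

/-!
Every common neighbour `c` of `x` and `y` outside the edge `e₀ ⊇ {x, y}` comes with the edges
`xc` and `yc`, unique by linearity. A set of such `c` on which both `c ↦ xc` and `c ↦ yc` are
injective, of size `s`, together with `e₀` is a Berge-`B_s`. So a maximal such set `R` has fewer
than `s` elements, and by maximality every other `c` lies in `(xr ∪ yr) \ {x, y}`, a set of at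
most `2k - 3` vertices, for some `r ∈ R`. Adding the at most `k - 2` common neighbours inside `e₀`
gives `(k - 2) + (s - 1)(2k - 3) = (k - 1)(2s - 1) - s`.
-/

attribute [local instance] Classical.propDecidable

/-- The degree of a vertex. -/
def hDeg {V : Type*} [DecidableEq V] (E : Finset (Finset V)) (v : V) : ℕ :=
  (E.filter (fun e => v ∈ e)).card

/-- The neighbourhood of `v`. -/
def hNbhd {V : Type*} [Fintype V] [DecidableEq V] (E : Finset (Finset V)) (v : V) :
    Finset V :=
  Finset.univ.filter (fun w => w ≠ v ∧ ∃ e ∈ E, v ∈ e ∧ w ∈ e)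

/-- `H` contains no Berge-`B_s`, where `B_s` is the book of `s` triangles sharing a
common edge `{a,b}`: there do not exist distinct vertices `a, b, c_1, …, c_s` and
`2s+1` distinct hyperedges `e₀ ⊇ {a,b}`, `f i ⊇ {a, c i}`, `g i ⊇ {b, c i}`. -/
def BergeBookFree {V : Type*} (E : Finset (Finset V)) (s : ℕ) : Prop :=
  ¬ ∃ (a b : V) (c : Fin s → V) (e₀ : Finset V) (f g : Fin s → Finset V),
      a ≠ b ∧ Function.Injective c ∧ (∀ i, c i ≠ a ∧ c i ≠ b) ∧
      e₀ ∈ E ∧ a ∈ e₀ ∧ b ∈ e₀ ∧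
      (∀ i, f i ∈ E ∧ a ∈ f i ∧ c i ∈ f i) ∧
      (∀ i, g i ∈ E ∧ b ∈ g i ∧ c i ∈ g i) ∧
      Function.Injective f ∧ Function.Injective g ∧
      (∀ i j, f i ≠ g j) ∧ (∀ i, e₀ ≠ f i ∧ e₀ ≠ g i)

open Finset

section InjOnPair

variable {α β : Type*}

theorem exists_injOn_pair_maximal (N : Finset α) (f g : α → β) :
    ∃ R ⊆ N, Set.InjOn f R ∧ Set.InjOn g R ∧
      ∀ T ⊆ N, Set.InjOn f T → Set.InjOn g T → #T ≤ #R := by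
  obtain ⟨R, hR, hmax⟩ := exists_max_image
    (N.powerset.filter fun T : Finset α => Set.InjOn f (T : Set α) ∧ Set.InjOn g (T : Set α))
    (fun T => #T)
    ⟨∅, by simp⟩
  simp only [mem_filter, mem_powerset] at hR hmax
  exact ⟨R, hR.1, hR.2.1, hR.2.2, fun T hT hf hg => hmax T ⟨hT, hf, hg⟩⟩

variable [DecidableEq α] [DecidableEq β]

theorem subset_biUnion_of_injOn_pair_maximal {N R : Finset α} {f g : α → β} (hRN : R ⊆ N)
    (hf : Set.InjOn f R) (hg : Set.InjOn g R)
    (hmax : ∀ T ⊆ N, Set.InjOn f T → Set.InjOn g T → #T ≤ #R) :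
    N ⊆ R.biUnion fun r => {c ∈ N | f c = f r ∨ g c = g r} := by
  intro c hc
  simp only [mem_biUnion, mem_filter]
  by_cases hcR : c ∈ R
  · exact ⟨c, hcR, hc, Or.inl rfl⟩
  by_contra! huncovered
  have hcR' : c ∉ (R : Set α) := hcR
  have hins : #(insert c R) ≤ #R := by
    refine hmax _ (insert_subset hc hRN) ?_ ?_ <;> rw [coe_insert, Set.injOn_insert hcR']
    · exact ⟨hf, fun ⟨r, hr, hfr⟩ => (huncovered r hr hc).1 hfr.symm⟩
    · exact ⟨hg, fun ⟨r, hr, hgr⟩ => (huncovered r hr hc).2 hgr.symm⟩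
  rw [card_insert_of_notMem hcR] at hins
  omega

/-- The bound `#N ≤ (s - 1) * m`, stated without truncated subtraction. -/
theorem card_add_le_mul_of_forall_not_injOn_pair {N : Finset α} {f g : α → β} {s m : ℕ}
    (hclass : ∀ r ∈ N, #{c ∈ N | f c = f r ∨ g c = g r} ≤ m)
    (hno : ∀ T ⊆ N, #T = s → Set.InjOn f T → ¬ Set.InjOn g T) :
    #N + m ≤ s * m := by
  obtain ⟨R, hRN, hf, hg, hmax⟩ := exists_injOn_pair_maximal N f g
  have hRs : #R + 1 ≤ s := by
    by_contra! hsR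
    obtain ⟨T, hTR, hT⟩ := exists_subset_card_eq (Nat.le_of_lt_succ hsR)
    exact hno T (hTR.trans hRN) hT (hf.mono (coe_subset.2 hTR)) (hg.mono (coe_subset.2 hTR))
  have hN : #N ≤ #R * m :=
    calc #N ≤ #(R.biUnion fun r => {c ∈ N | f c = f r ∨ g c = g r}) :=
          card_le_card (subset_biUnion_of_injOn_pair_maximal hRN hf hg hmax)
      _ ≤ ∑ r ∈ R, #{c ∈ N | f c = f r ∨ g c = g r} := card_biUnion_le
      _ ≤ ∑ _r ∈ R, m := sum_le_sum fun r hr => hclass r (hRN hr)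
      _ = #R * m := by rw [sum_const, smul_eq_mul]
  nlinarith

end InjOnPair

section LinearHypergraph

variable {V : Type*} [DecidableEq V] {E : Finset (Finset V)}

theorem eq_of_mem_of_mem_of_linear (hlin : ∀ e ∈ E, ∀ f ∈ E, e ≠ f → (e ∩ f).card ≤ 1)
    {u w : V} (huw : u ≠ w) {e e' : Finset V} (he : e ∈ E) (he' : e' ∈ E)
    (hu : u ∈ e) (hw : w ∈ e) (hu' : u ∈ e') (hw' : w ∈ e') : e = e' := by
  by_contra hne
  have : 1 < #(e ∩ e') := one_lt_card.2 ⟨u, mem_inter.2 ⟨hu, hu'⟩, w, mem_inter.2 ⟨hw, hw'⟩, huw⟩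
  exact absurd (hlin e he e' he' hne) (by omega)

noncomputable def edgeThrough (E : Finset (Finset V)) (u v : V) : Finset V :=
  if h : ∃ e ∈ E, u ∈ e ∧ v ∈ e then h.choose else ∅

theorem edgeThrough_spec {u v : V} (h : ∃ e ∈ E, u ∈ e ∧ v ∈ e) :
    edgeThrough E u v ∈ E ∧ u ∈ edgeThrough E u v ∧ v ∈ edgeThrough E u v := by
  rw [edgeThrough, dif_pos h]
  exact h.choose_spec

variable [Fintype V]

theorem mem_hNbhd {v w : V} : w ∈ hNbhd E v ↔ w ≠ v ∧ ∃ e ∈ E, v ∈ e ∧ w ∈ e := by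
  simp [hNbhd]

theorem edgeThrough_mem_of_mem_hNbhd {v w : V} (hw : w ∈ hNbhd E v) :
    edgeThrough E v w ∈ E ∧ v ∈ edgeThrough E v w ∧ w ∈ edgeThrough E v w :=
  edgeThrough_spec (mem_hNbhd.1 hw).2

theorem not_bergeBookFree_of_injOn_edgeThrough
    (hlin : ∀ e ∈ E, ∀ f ∈ E, e ≠ f → (e ∩ f).card ≤ 1) {s : ℕ} {x y : V} (hxy : x ≠ y)
    {e₀ : Finset V} (he₀ : e₀ ∈ E) (hx : x ∈ e₀) (hy : y ∈ e₀)
    {T : Finset V} (hT : T ⊆ (hNbhd E x ∩ hNbhd E y) \ e₀) (hcard : #T = s)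
    (hf : Set.InjOn (edgeThrough E x) T) (hg : Set.InjOn (edgeThrough E y) T) :
    ¬ BergeBookFree E s := by
  let c : Fin s → V := fun i => (T.equivFinOfCardEq hcard).symm i
  have hcT (i : Fin s) : c i ∈ T := ((T.equivFinOfCardEq hcard).symm i).2
  have hcN (i : Fin s) : c i ∈ hNbhd E x ∩ hNbhd E y := (mem_sdiff.1 (hT (hcT i))).1
  have hce₀ (i : Fin s) : c i ∉ e₀ := (mem_sdiff.1 (hT (hcT i))).2
  have hxc (i : Fin s) := edgeThrough_mem_of_mem_hNbhd (mem_inter.1 (hcN i)).1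
  have hyc (i : Fin s) := edgeThrough_mem_of_mem_hNbhd (mem_inter.1 (hcN i)).2
  have hc : Function.Injective c := fun i j hij =>
    (T.equivFinOfCardEq hcard).symm.injective (Subtype.coe_injective hij)
  refine not_not.2 ⟨x, y, c, e₀, fun i => edgeThrough E x (c i), fun i => edgeThrough E y (c i),
    hxy, hc, fun i => ⟨(mem_hNbhd.1 (mem_inter.1 (hcN i)).1).1,
      (mem_hNbhd.1 (mem_inter.1 (hcN i)).2).1⟩, he₀, hx, hy, hxc, hyc,
    fun i j hij => hc (hf (hcT i) (hcT j) hij), fun i j hij => hc (hg (hcT i) (hcT j) hij),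
    fun i j hij => ?_, fun i => ⟨fun h => hce₀ i (h ▸ (hxc i).2.2),
      fun h => hce₀ i (h ▸ (hyc i).2.2)⟩⟩
  -- an edge through `x` and `y` is `e₀`, which misses `c i`
  have hyx : y ∈ edgeThrough E x (c i) := by
    rw [show edgeThrough E x (c i) = edgeThrough E y (c j) from hij]
    exact (hyc j).2.1
  exact hce₀ i (eq_of_mem_of_mem_of_linear hlin hxy (hxc i).1 he₀ (hxc i).2.1 hyx hx hy ▸
    (hxc i).2.2)

theorem card_commonNbhd_inter_edge_add_two_le {k : ℕ} (hunif : ∀ e ∈ E, e.card = k)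
    {x y : V} (hxy : x ≠ y) {e₀ : Finset V} (he₀ : e₀ ∈ E) (hx : x ∈ e₀) (hy : y ∈ e₀) :
    #((hNbhd E x ∩ hNbhd E y) ∩ e₀) + 2 ≤ k := by
  have hsub : (hNbhd E x ∩ hNbhd E y) ∩ e₀ ⊆ (e₀.erase x).erase y := by
    intro c hc
    simp only [mem_inter, mem_hNbhd] at hc
    simp only [mem_erase]
    exact ⟨hc.1.2.1, hc.1.1.1, hc.2⟩
  have h₁ := card_erase_add_one hx
  have h₂ := card_erase_add_one (mem_erase.2 ⟨hxy.symm, hy⟩)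
  have := card_le_card hsub
  rw [← hunif e₀ he₀]
  omega

theorem card_edgeThrough_class_le {k : ℕ} (hunif : ∀ e ∈ E, e.card = k) {x y r : V}
    {N : Finset V} (hN : N ⊆ hNbhd E x ∩ hNbhd E y) (hr : r ∈ hNbhd E x ∩ hNbhd E y) :
    #{c ∈ N | edgeThrough E x c = edgeThrough E x r ∨ edgeThrough E y c = edgeThrough E y r}
      ≤ 2 * k - 3 := by
  obtain ⟨hrx, hry⟩ := mem_inter.1 hr
  set A := (edgeThrough E x r).erase x
  set B := (edgeThrough E y r).erase y
  have hsub : {c ∈ N | edgeThrough E x c = edgeThrough E x r ∨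
      edgeThrough E y c = edgeThrough E y r} ⊆ A ∪ B := by
    intro c hc
    obtain ⟨hcN, hcr⟩ := mem_filter.1 hc
    obtain ⟨hcx, hcy⟩ := mem_inter.1 (hN hcN)
    rcases hcr with h | h
    · exact mem_union_left _ (mem_erase.2 ⟨(mem_hNbhd.1 hcx).1,
        h ▸ (edgeThrough_mem_of_mem_hNbhd hcx).2.2⟩)
    · exact mem_union_right _ (mem_erase.2 ⟨(mem_hNbhd.1 hcy).1,
        h ▸ (edgeThrough_mem_of_mem_hNbhd hcy).2.2⟩)
  have hA : #A + 1 = k := by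
    rw [card_erase_add_one (edgeThrough_mem_of_mem_hNbhd hrx).2.1,
      hunif _ (edgeThrough_mem_of_mem_hNbhd hrx).1]
  have hB : #B + 1 = k := by
    rw [card_erase_add_one (edgeThrough_mem_of_mem_hNbhd hry).2.1,
      hunif _ (edgeThrough_mem_of_mem_hNbhd hry).1]
  have hAB : 1 ≤ #(A ∩ B) := card_pos.2 ⟨r, mem_inter.2
    ⟨mem_erase.2 ⟨(mem_hNbhd.1 hrx).1, (edgeThrough_mem_of_mem_hNbhd hrx).2.2⟩,
     mem_erase.2 ⟨(mem_hNbhd.1 hry).1, (edgeThrough_mem_of_mem_hNbhd hry).2.2⟩⟩⟩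
  have := card_union_add_card_inter A B
  have := card_le_card hsub
  omega

end LinearHypergraph

theorem common_nbhd_bound_general {V : Type*} [Fintype V] [DecidableEq V]
    (E : Finset (Finset V)) (k s : ℕ)
    (hunif : ∀ e ∈ E, e.card = k)
    (hlin : ∀ e ∈ E, ∀ f ∈ E, e ≠ f → (e ∩ f).card ≤ 1)
    (hfree : BergeBookFree E s)
    (x y : V) (hadj : ∃ e ∈ E, x ∈ e ∧ y ∈ e ∧ x ≠ y) :
    (((hNbhd E x) ∩ (hNbhd E y)).card : ℝ)
      ≤ ((k : ℝ) - 1) * (2 * (s : ℝ) - 1) - (s : ℝ) := by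
  obtain ⟨e₀, he₀, hx, hy, hxy⟩ := hadj
  set N := hNbhd E x ∩ hNbhd E y
  have h_on : #(N ∩ e₀) + 2 ≤ k := card_commonNbhd_inter_edge_add_two_le hunif hxy he₀ hx hy
  have h_off : #(N \ e₀) + (2 * k - 3) ≤ s * (2 * k - 3) :=
    card_add_le_mul_of_forall_not_injOn_pair
      (fun r hr => card_edgeThrough_class_le hunif sdiff_subset (mem_sdiff.1 hr).1)
      (fun T hT hcard hf hg =>
        not_bergeBookFree_of_injOn_edgeThrough hlin hxy he₀ hx hy hT hcard hf hg hfree)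
  have h_split := card_inter_add_card_sdiff N e₀
  have h_cast : ((2 * k - 3 : ℕ) : ℝ) = 2 * k - 3 := by
    rw [Nat.cast_sub (by omega)]
    push_cast
    ring
  have h_on' : (#(N ∩ e₀) : ℝ) + 2 ≤ k := by exact_mod_cast h_on
  have h_off' : (#(N \ e₀) : ℝ) + (2 * k - 3) ≤ s * (2 * k - 3) := by
    rw [← h_cast]
    exact_mod_cast h_off
  have h_split' : (#(N ∩ e₀) : ℝ) + #(N \ e₀) = #N := by exact_mod_cast h_split
  linarith

/-- In a connected linear `k`-uniform Berge-`B_s`-free hypergraph (`k ≥ 3`, `s ≥ 2`),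
any two adjacent vertices `x, y` satisfy `|N_{xy}| ≤ (k-1)(2s-1) - s`. -/
theorem common_nbhd_bound {V : Type*} [Fintype V] [DecidableEq V]
    (E : Finset (Finset V)) (k s : ℕ) (hk : 3 ≤ k) (hs : 2 ≤ s)
    (hunif : ∀ e ∈ E, e.card = k)
    (hlin : ∀ e ∈ E, ∀ f ∈ E, e ≠ f → (e ∩ f).card ≤ 1)
    (hconn : ∀ u v : V, Relation.ReflTransGen (fun a b => ∃ e ∈ E, a ∈ e ∧ b ∈ e) u v)
    (hfree : BergeBookFree E s)
    (x y : V) (hadj : ∃ e ∈ E, x ∈ e ∧ y ∈ e ∧ x ≠ y) :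
    (((hNbhd E x) ∩ (hNbhd E y)).card : ℝ)
      ≤ ((k : ℝ) - 1) * (2 * (s : ℝ) - 1) - (s : ℝ) :=
  common_nbhd_bound_general E k s hunif hlin hfree x y hadj
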